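/- arXiv:1607.03212 — 3 statements merged into one kernel-verified Lean document; each statement's English description precedes it below -/
import Mathlib

section
/- Let & be a continuous t-norm on [0,1] with residuation →, and let a,b ∈ [0,1]. Then for every ε > 0 there exists δ > 0 such that a & ((a−δ) → b) < min{a,b} + ε. -/
/-!
Let `x = max (a - δ) 0` and `r = x → b`. Since `[0,1]` is compact and `x & ·` is continuous,
the supremum defining `r` is attained, so `x & r ≤ b`. Uniform continuity of `&` on `[0,1]²`
makes `a & r` close to `x & r` once `δ` is small, and `a & r ≤ a & 1 = a`; together
`a & r < min a b + ε`.
-/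

noncomputable def tres (f : ℝ → ℝ → ℝ) (x y : ℝ) : ℝ :=
  sSup {z | z ∈ Set.Icc (0:ℝ) 1 ∧ f x z ≤ y}

def IsContTNorm (f : ℝ → ℝ → ℝ) : Prop :=
  (∀ a ∈ Set.Icc (0:ℝ) 1, ∀ b ∈ Set.Icc (0:ℝ) 1, f a b ∈ Set.Icc (0:ℝ) 1) ∧
  ContinuousOn (fun p : ℝ × ℝ => f p.1 p.2) (Set.Icc 0 1 ×ˢ Set.Icc 0 1) ∧
  (∀ a ∈ Set.Icc (0:ℝ) 1, ∀ b ∈ Set.Icc (0:ℝ) 1, f a b = f b a) ∧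
  (∀ a ∈ Set.Icc (0:ℝ) 1, ∀ b ∈ Set.Icc (0:ℝ) 1, ∀ c ∈ Set.Icc (0:ℝ) 1,
    f (f a b) c = f a (f b c)) ∧
  (∀ a ∈ Set.Icc (0:ℝ) 1, ∀ b ∈ Set.Icc (0:ℝ) 1, ∀ c ∈ Set.Icc (0:ℝ) 1,
    a ≤ b → f a c ≤ f b c) ∧
  (∀ a ∈ Set.Icc (0:ℝ) 1, f a 1 = a)

namespace IsContTNorm

open Set

variable {f : ℝ → ℝ → ℝ}

theorem one_apply (ht : IsContTNorm f) {x : ℝ} (hx : x ∈ Icc (0:ℝ) 1) : f 1 x = x := by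
  rw [ht.2.2.1 1 (right_mem_Icc.2 zero_le_one) x hx, ht.2.2.2.2.2 x hx]

theorem apply_le_left (ht : IsContTNorm f) {x z : ℝ} (hx : x ∈ Icc (0:ℝ) 1)
    (hz : z ∈ Icc (0:ℝ) 1) : f x z ≤ x :=
  calc f x z = f z x := ht.2.2.1 x hx z hz
    _ ≤ f 1 x := ht.2.2.2.2.1 z hz 1 (right_mem_Icc.2 zero_le_one) x hx hz.2
    _ = x := ht.one_apply hx

theorem apply_zero (ht : IsContTNorm f) {x : ℝ} (hx : x ∈ Icc (0:ℝ) 1) : f x 0 = 0 := by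
  have h0 : (0:ℝ) ∈ Icc (0:ℝ) 1 := left_mem_Icc.2 zero_le_one
  refine le_antisymm ?_ (ht.1 x hx 0 h0).1
  calc f x 0 = f 0 x := ht.2.2.1 x hx 0 h0
    _ ≤ 0 := ht.apply_le_left h0 hx

theorem continuousOn_apply (ht : IsContTNorm f) {x : ℝ} (hx : x ∈ Icc (0:ℝ) 1) :
    ContinuousOn (f x) (Icc 0 1) :=
  ht.2.1.comp (continuous_const.prodMk continuous_id).continuousOn
    fun _ hz => mk_mem_prod hx hz

theorem tres_mem (ht : IsContTNorm f) {x y : ℝ} (hx : x ∈ Icc (0:ℝ) 1) (hy : 0 ≤ y) :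
    tres f x y ∈ {z | z ∈ Icc (0:ℝ) 1 ∧ f x z ≤ y} := by
  have hclosed : IsClosed {z | z ∈ Icc (0:ℝ) 1 ∧ f x z ≤ y} :=
    (ht.continuousOn_apply hx).preimage_isClosed_of_isClosed isClosed_Icc isClosed_Iic
  refine (isCompact_Icc.of_isClosed_subset hclosed fun _ hz => hz.1).sSup_mem ⟨0, ?_⟩
  exact ⟨left_mem_Icc.2 zero_le_one, (ht.apply_zero hx).symm ▸ hy⟩

theorem exists_pos_forall_abs_sub_lt (ht : IsContTNorm f) {ε : ℝ} (hε : 0 < ε) :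
    ∃ δ > 0, ∀ x ∈ Icc (0:ℝ) 1, ∀ x' ∈ Icc (0:ℝ) 1, ∀ z ∈ Icc (0:ℝ) 1,
      |x - x'| < δ → |f x z - f x' z| < ε := by
  have huc := (isCompact_Icc.prod isCompact_Icc).uniformContinuousOn_of_continuous ht.2.1
  obtain ⟨δ, hδ, hclose⟩ := Metric.uniformContinuousOn_iff.1 huc ε hε
  refine ⟨δ, hδ, fun x hx x' hx' z hz hxx' => ?_⟩
  have hdist : dist (x, z) (x', z) < δ := by simpa [Prod.dist_eq, Real.dist_eq] using hxx'
  simpa [Real.dist_eq] using hclose (x, z) (mk_mem_prod hx hz) (x', z) (mk_mem_prod hx' hz) hdist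

end IsContTNorm

/-- for all `a, b ∈ [0,1]` and `ε > 0` there is `δ > 0` with
`a & ((a − δ) → b) < min a b + ε` (with `a − δ` truncated to remain in `[0,1]`). -/
theorem stmt4 (f : ℝ → ℝ → ℝ) (ht : IsContTNorm f)
    (a : ℝ) (ha : a ∈ Set.Icc (0:ℝ) 1) (b : ℝ) (hb : b ∈ Set.Icc (0:ℝ) 1) :
    ∀ ε > (0:ℝ), ∃ δ > (0:ℝ), f a (tres f (max (a - δ) 0) b) < min a b + ε := by
  intro ε hε
  obtain ⟨δ, hδ, hclose⟩ := ht.exists_pos_forall_abs_sub_lt hε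
  refine ⟨δ / 2, half_pos hδ, ?_⟩
  set x := max (a - δ / 2) 0
  have hx : x ∈ Set.Icc (0:ℝ) 1 := ⟨le_max_right _ _, max_le (by linarith [ha.2]) zero_le_one⟩
  have hax : |a - x| < δ := by
    rw [abs_lt]
    constructor <;> linarith [le_max_left (a - δ / 2) 0, max_le (by linarith : a - δ / 2 ≤ a) ha.1]
  obtain ⟨hr, hxr⟩ := ht.tres_mem hx hb.1
  have hnear := (abs_lt.1 (hclose a ha x hx _ hr hax)).2
  rw [← min_add_add_right]
  exact lt_min (by linarith [ht.apply_le_left ha hr]) (by linarith)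
end

section
/- Let & be a continuous t-norm on [0,1], and let a < b both be idempotent elements for &. Then the restriction of & to [a,b] is a continuous t-norm on [a,b], i.e., & maps [a,b]×[a,b] into [a,b], is continuous, commutative, associative, monotone, and has b as unit on [a,b]. -/
/-!
The lower bound `a ≤ x & y` on `[a, b]` comes from `a = a & a ≤ x & y`, the upper bound from
`x & y ≤ y`. For the unit law, continuity and the intermediate value theorem write any
`x ∈ [0, b]` as `x = c & b`, and then `x & b = c & (b & b) = c & b = x`.
-/

open Set

namespace IsContTNorm

variable {f : ℝ → ℝ → ℝ} (ht : IsContTNorm f)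
include ht

theorem mono_right {x y z : ℝ} (hx : x ∈ Icc (0:ℝ) 1) (hy : y ∈ Icc (0:ℝ) 1)
    (hz : z ∈ Icc (0:ℝ) 1) (hyz : y ≤ z) : f x y ≤ f x z := by
  rw [ht.2.2.1 x hx y hy, ht.2.2.1 x hx z hz]
  exact ht.2.2.2.2.1 y hy z hz x hx hyz

theorem apply_le_left_s7 {x y : ℝ} (hx : x ∈ Icc (0:ℝ) 1) (hy : y ∈ Icc (0:ℝ) 1) : f x y ≤ x :=
  calc f x y ≤ f x 1 := ht.mono_right hx hy (right_mem_Icc.2 zero_le_one) hy.2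
    _ = x := ht.2.2.2.2.2 x hx

theorem apply_le_right {x y : ℝ} (hx : x ∈ Icc (0:ℝ) 1) (hy : y ∈ Icc (0:ℝ) 1) : f x y ≤ y :=
  ht.2.2.1 x hx y hy ▸ ht.apply_le_left_s7 hy hx

theorem le_apply_of_idempotent {a x y : ℝ} (ha : a ∈ Icc (0:ℝ) 1) (hia : f a a = a)
    (hx : x ∈ Icc (0:ℝ) 1) (hy : y ∈ Icc (0:ℝ) 1) (hax : a ≤ x) (hay : a ≤ y) : a ≤ f x y :=
  calc a = f a a := hia.symm
    _ ≤ f x a := ht.2.2.2.2.1 a ha x hx a ha hax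
    _ ≤ f x y := ht.mono_right hx ha hy hay

theorem continuousOn_left {y : ℝ} (hy : y ∈ Icc (0:ℝ) 1) :
    ContinuousOn (fun x => f x y) (Icc 0 1) :=
  ht.2.1.comp (continuous_id.prodMk continuous_const).continuousOn fun _ hx => ⟨hx, hy⟩

theorem apply_idempotent_eq_self {b x : ℝ} (hb : b ∈ Icc (0:ℝ) 1) (hib : f b b = b)
    (hx : x ∈ Icc 0 b) : f x b = x := by
  have hsub : Icc 0 b ⊆ Icc (0:ℝ) 1 := Icc_subset_Icc le_rfl hb.2
  have hfx : x ∈ Icc (f 0 b) (f b b) :=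
    ⟨(ht.apply_le_left_s7 (left_mem_Icc.2 zero_le_one) hb).trans hx.1, by rw [hib]; exact hx.2⟩
  obtain ⟨c, hc, rfl⟩ :=
    intermediate_value_Icc hb.1 ((ht.continuousOn_left hb).mono hsub) hfx
  rw [ht.2.2.2.1 c (hsub hc) b hb b hb, hib]

theorem mapsTo_Icc_of_idempotent {a b : ℝ} (ha : a ∈ Icc (0:ℝ) 1) (hb : b ∈ Icc (0:ℝ) 1)
    (hia : f a a = a) {x y : ℝ} (hx : x ∈ Icc a b) (hy : y ∈ Icc a b) : f x y ∈ Icc a b := by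
  have hsub : Icc a b ⊆ Icc (0:ℝ) 1 := Icc_subset_Icc ha.1 hb.2
  exact ⟨ht.le_apply_of_idempotent ha hia (hsub hx) (hsub hy) hx.1 hy.1,
    (ht.apply_le_right (hsub hx) (hsub hy)).trans hy.2⟩

end IsContTNorm

theorem stmt7_general (f : ℝ → ℝ → ℝ) (ht : IsContTNorm f)
    (a : ℝ) (ha : a ∈ Set.Icc (0:ℝ) 1) (b : ℝ) (hb : b ∈ Set.Icc (0:ℝ) 1)
    (hia : f a a = a) (hib : f b b = b) :
    (∀ x ∈ Set.Icc a b, ∀ y ∈ Set.Icc a b, f x y ∈ Set.Icc a b) ∧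
    ContinuousOn (fun p : ℝ × ℝ => f p.1 p.2) (Set.Icc a b ×ˢ Set.Icc a b) ∧
    (∀ x ∈ Set.Icc a b, ∀ y ∈ Set.Icc a b, f x y = f y x) ∧
    (∀ x ∈ Set.Icc a b, ∀ y ∈ Set.Icc a b, ∀ z ∈ Set.Icc a b, f (f x y) z = f x (f y z)) ∧
    (∀ x ∈ Set.Icc a b, ∀ y ∈ Set.Icc a b, ∀ z ∈ Set.Icc a b, x ≤ y → f x z ≤ f y z) ∧
    (∀ x ∈ Set.Icc a b, f x b = x) := by
  have sub : Icc a b ⊆ Icc (0:ℝ) 1 := Icc_subset_Icc ha.1 hb.2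
  obtain ⟨-, hcont, hcomm, hassoc, hmono, -⟩ := id ht
  refine ⟨fun x hx y hy => ht.mapsTo_Icc_of_idempotent ha hb hia hx hy,
    hcont.mono (prod_mono sub sub), fun x hx y hy => hcomm x (sub hx) y (sub hy),
    fun x hx y hy z hz => hassoc x (sub hx) y (sub hy) z (sub hz),
    fun x hx y hy z hz => hmono x (sub hx) y (sub hy) z (sub hz),
    fun x hx => ht.apply_idempotent_eq_self hb hib ⟨ha.1.trans hx.1, hx.2⟩⟩

/-- if `a < b` are idempotent, the restriction of the continuous t-norm to
`[a,b]` is a continuous t-norm on `[a,b]` with unit `b`. -/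
theorem stmt7 (f : ℝ → ℝ → ℝ) (ht : IsContTNorm f)
    (a : ℝ) (ha : a ∈ Set.Icc (0:ℝ) 1) (b : ℝ) (hb : b ∈ Set.Icc (0:ℝ) 1)
    (hab : a < b) (hia : f a a = a) (hib : f b b = b) :
    (∀ x ∈ Set.Icc a b, ∀ y ∈ Set.Icc a b, f x y ∈ Set.Icc a b) ∧
    ContinuousOn (fun p : ℝ × ℝ => f p.1 p.2) (Set.Icc a b ×ˢ Set.Icc a b) ∧
    (∀ x ∈ Set.Icc a b, ∀ y ∈ Set.Icc a b, f x y = f y x) ∧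
    (∀ x ∈ Set.Icc a b, ∀ y ∈ Set.Icc a b, ∀ z ∈ Set.Icc a b, f (f x y) z = f x (f y z)) ∧
    (∀ x ∈ Set.Icc a b, ∀ y ∈ Set.Icc a b, ∀ z ∈ Set.Icc a b, x ≤ y → f x z ≤ f y z) ∧
    (∀ x ∈ Set.Icc a b, f x b = x) :=
  stmt7_general f ht a ha b hb hia hib
end

section
/- Let Q = ([0,1],&,1) with & a continuous t-norm, A a D(Q)-category, and φ the weight generated by a forward Cauchy net {x_λ} in A. Then an element a ∈ A₀ is a supremum of φ if and only if a is a Yoneda limit of {x_λ}. -/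
/-- A D(Q)-category (ordered fuzzy set) valued in `([0,1], f, 1)`. -/
def IsDCat {α : Type*} (f : ℝ → ℝ → ℝ) (A : α → α → ℝ) : Prop :=
  (∀ x y, A x y ∈ Set.Icc (0:ℝ) 1) ∧
  (∀ x y, A x y ≤ min (A x x) (A y y)) ∧
  (∀ x y z, f (tres f (A y y) (A y z)) (A x y) ≤ A x z)

/-- A net is forward Cauchy if `lim_{ν ≥ μ} A(x_μ, x_ν)` exists. -/
def FwdCauchy {α : Type*} {Λ : Type*} [Preorder Λ] (A : α → α → ℝ) (x : Λ → α) : Prop :=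
  ∃ L : ℝ, Filter.Tendsto (fun q : Λ × Λ => A (x q.1) (x q.2))
    (Filter.atTop ⊓ Filter.principal {q : Λ × Λ | q.1 ≤ q.2}) (nhds L)

/-- A net is biCauchy if `lim_{μ,ν} A(x_μ, x_ν)` exists. -/
def BiCauchy {α : Type*} {Λ : Type*} [Preorder Λ] (A : α → α → ℝ) (x : Λ → α) : Prop :=
  ∃ L : ℝ, Filter.Tendsto (fun q : Λ × Λ => A (x q.1) (x q.2)) Filter.atTop (nhds L)

/-- The type `⋁_λ ⋀_{μ ≥ λ} A(x_μ, x_μ)` of a net. -/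
noncomputable def genType {α : Type*} {Λ : Type*} [Preorder Λ]
    (A : α → α → ℝ) (x : Λ → α) : ℝ :=
  ⨆ l : Λ, ⨅ σ : {σ : Λ // l ≤ σ}, A (x σ.1) (x σ.1)

/-- The weight `⋁_λ ⋀_{μ ≥ λ} A(−, x_μ)` generated by a net. -/
noncomputable def genWeight {α : Type*} {Λ : Type*} [Preorder Λ]
    (A : α → α → ℝ) (x : Λ → α) : α → ℝ :=
  fun u => ⨆ l : Λ, ⨅ σ : {σ : Λ // l ≤ σ}, A u (x σ.1)

/-- The coweight `⋁_λ ⋀_{μ ≥ λ} A(x_μ, −)` generated by a net. -/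
noncomputable def genCoweight {α : Type*} {Λ : Type*} [Preorder Λ]
    (A : α → α → ℝ) (x : Λ → α) : α → ℝ :=
  fun v => ⨆ l : Λ, ⨅ σ : {σ : Λ // l ≤ σ}, A (x σ.1) v

/-- `s` is a Yoneda limit of the net `x`. -/
noncomputable def YonedaLim {α : Type*} {Λ : Type*} [Preorder Λ]
    (A : α → α → ℝ) (x : Λ → α) (s : α) : Prop :=
  A s s = genType A x ∧ ∀ y, A s y = genCoweight A x y

/-- `s` is a supremum of a weight `φ` of type `tφ`:
`A(s,−) = PA(φ, y(−)) = A(y,y) ∧ ⋀_u (φ(u) → A(u,y)) & tφ`. -/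
noncomputable def IsSupremum {α : Type*} (f : ℝ → ℝ → ℝ) (A : α → α → ℝ)
    (tφ : ℝ) (φ : α → ℝ) (s : α) : Prop :=
  A s s = tφ ∧ ∀ y, A s y = min (A y y) (⨅ u : α, f (tres f (φ u) (A u y)) tφ)

/-!
Write `&` for the t-norm `f`, `→` for its residuum `tres f`, `L` for the limit of `A(x_μ, x_ν)`
(`ν ≥ μ`) and `b = liminf_μ A(x_μ, y)`, the value at `y` of the coweight that defines Yoneda
limits. Then `L` is the type of `φ` and also the limit of `φ(x_μ)`, so the claim is that `A(y,y) ∧ ⋀_u (φ(u) → A(u,y)) & L = b` for all `y`.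

Since `&` is continuous, `[0,1]` is divisible: `a & (a → c) = a ∧ c`. Pass to an ultrafilter
`𝒰` finer than `atTop` along which `A(x_μ, y) → b`, and to `𝒰`-limits of the bounded quantities
involved. Testing the infimum at `u = x_μ` and letting `μ → 𝒰` bounds it by
`lim (φ(x_μ) → A(x_μ,y)) & L = lim φ(x_μ) ∧ A(x_μ,y) = b`. Conversely, the `𝒰`-limit `t` of
`A(x_μ,x_μ) → A(x_μ,y)` satisfies `L & t = b`, and the composition law
`(A(x_μ,x_μ) → A(x_μ,y)) & A(u,x_μ) ≤ A(u,y)` passes to the limit; as the `𝒰`-limit of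
`A(u,x_μ)` dominates its liminf `φ(u)`, this gives `t & φ(u) ≤ A(u,y)`, i.e.
`t ≤ φ(u) → A(u,y)`, whence `b = L & t ≤ (φ(u) → A(u,y)) & L`.
-/

open Filter Set Topology

theorem IsCompact.exists_tendsto_ultrafilter {β X : Type*} [TopologicalSpace X] {s : Set X}
    (hs : IsCompact s) (𝒰 : Ultrafilter β) {g : β → X} (hg : ∀ i, g i ∈ s) :
    ∃ c ∈ s, Tendsto g 𝒰 (𝓝 c) :=
  hs.ultrafilter_le_nhds' (𝒰.map g) (Ultrafilter.mem_map.2 (Eventually.of_forall hg))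

theorem le_tres {f : ℝ → ℝ → ℝ} {a c z : ℝ} (hz : z ∈ Icc 0 1) (h : f a z ≤ c) :
    z ≤ tres f a c :=
  le_csSup ⟨1, fun _ hw => hw.1.2⟩ ⟨hz, h⟩

namespace IsContTNorm

variable {f : ℝ → ℝ → ℝ} (ht : IsContTNorm f) {a b c : ℝ}
include ht

theorem mem (ha : a ∈ Icc 0 1) (hb : b ∈ Icc 0 1) : f a b ∈ Icc 0 1 := ht.1 a ha b hb

theorem comm (ha : a ∈ Icc 0 1) (hb : b ∈ Icc 0 1) : f a b = f b a := ht.2.2.1 a ha b hb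

theorem mono_left (ha : a ∈ Icc 0 1) (hb : b ∈ Icc 0 1) (hc : c ∈ Icc 0 1) (h : a ≤ b) :
    f a c ≤ f b c :=
  ht.2.2.2.2.1 a ha b hb c hc h

theorem mono_right_s11 (ha : a ∈ Icc 0 1) (hb : b ∈ Icc 0 1) (hc : c ∈ Icc 0 1) (h : a ≤ b) :
    f c a ≤ f c b := by
  rw [ht.comm hc ha, ht.comm hc hb]
  exact ht.mono_left ha hb hc h

theorem mul_one (ha : a ∈ Icc 0 1) : f a 1 = a := ht.2.2.2.2.2 a ha

theorem mul_zero (ha : a ∈ Icc 0 1) : f a 0 = 0 := by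
  have h₀ : (0 : ℝ) ∈ Icc 0 1 := left_mem_Icc.2 zero_le_one
  have h₁ : (1 : ℝ) ∈ Icc 0 1 := right_mem_Icc.2 zero_le_one
  refine le_antisymm ?_ (ht.mem ha h₀).1
  calc f a 0 ≤ f 1 0 := ht.mono_left ha h₁ h₀ ha.2
    _ = 0 := by rw [ht.comm h₁ h₀, ht.mul_one h₀]

theorem continuousOn_right (ha : a ∈ Icc 0 1) : ContinuousOn (f a) (Icc 0 1) :=
  ht.2.1.comp (Continuous.prodMk_right a).continuousOn fun _ hz => ⟨ha, hz⟩

theorem tendsto {β : Type*} {F : Filter β} [F.NeBot] {p q : β → ℝ}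
    (hp : Tendsto p F (𝓝 a)) (hq : Tendsto q F (𝓝 b))
    (hpI : ∀ i, p i ∈ Icc 0 1) (hqI : ∀ i, q i ∈ Icc 0 1) :
    Tendsto (fun i => f (p i) (q i)) F (𝓝 (f a b)) := by
  have ha := isClosed_Icc.mem_of_tendsto hp (Eventually.of_forall hpI)
  have hb := isClosed_Icc.mem_of_tendsto hq (Eventually.of_forall hqI)
  exact (ht.2.1 (a, b) ⟨ha, hb⟩).tendsto.comp <| tendsto_nhdsWithin_iff.2
    ⟨hp.prodMk_nhds hq, Eventually.of_forall fun i => ⟨hpI i, hqI i⟩⟩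

theorem tres_mem_and_mul_tres_le (ha : a ∈ Icc 0 1) (hc : 0 ≤ c) :
    tres f a c ∈ Icc 0 1 ∧ f a (tres f a c) ≤ c := by
  have hclosed : IsClosed {z | z ∈ Icc (0 : ℝ) 1 ∧ f a z ≤ c} :=
    (ht.continuousOn_right ha).preimage_isClosed_of_isClosed isClosed_Icc isClosed_Iic
  exact hclosed.csSup_mem ⟨0, left_mem_Icc.2 zero_le_one, by rwa [ht.mul_zero ha]⟩
    ⟨1, fun _ hz => hz.1.2⟩

theorem tres_mem_s11 (ha : a ∈ Icc 0 1) (hc : 0 ≤ c) : tres f a c ∈ Icc 0 1 :=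
  (ht.tres_mem_and_mul_tres_le ha hc).1

theorem mul_tres_le (ha : a ∈ Icc 0 1) (hc : 0 ≤ c) : f a (tres f a c) ≤ c :=
  (ht.tres_mem_and_mul_tres_le ha hc).2

/-- Divisibility; for `c < a` it is the intermediate value theorem. -/
theorem mul_tres_eq_min (ha : a ∈ Icc 0 1) (hc : c ∈ Icc 0 1) : f a (tres f a c) = min a c := by
  have h₁ : (1 : ℝ) ∈ Icc 0 1 := right_mem_Icc.2 zero_le_one
  have hres := ht.tres_mem_s11 ha hc.1
  refine le_antisymm (le_min ?_ (ht.mul_tres_le ha hc.1)) ?_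
  · simpa only [ht.mul_one ha] using ht.mono_right_s11 hres h₁ ha hres.2
  rcases le_total a c with hac | hca
  · have hone : 1 ≤ tres f a c := le_tres h₁ (by rwa [ht.mul_one ha])
    simpa only [min_eq_left hac, ht.mul_one ha] using ht.mono_right_s11 h₁ hres ha hone
  · obtain ⟨z, hz, hfz⟩ := intermediate_value_Icc zero_le_one (ht.continuousOn_right ha)
      (show c ∈ Icc (f a 0) (f a 1) by rw [ht.mul_zero ha, ht.mul_one ha]; exact ⟨hc.1, hca⟩)
    calc min a c = f a z := by rw [min_eq_right hca, hfz]
      _ ≤ f a (tres f a c) := ht.mono_right_s11 hz hres ha (le_tres hz hfz.le)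

theorem exists_tendsto_tres {β : Type*} {𝒰 : Ultrafilter β} {p q : β → ℝ} {L b : ℝ}
    (hp : Tendsto p 𝒰 (𝓝 L)) (hq : Tendsto q 𝒰 (𝓝 b))
    (hpI : ∀ i, p i ∈ Icc 0 1) (hqI : ∀ i, q i ∈ Icc 0 1) :
    ∃ t ∈ Icc (0 : ℝ) 1, Tendsto (fun i => tres f (p i) (q i)) 𝒰 (𝓝 t) ∧ f L t = min L b := by
  have hresI : ∀ i, tres f (p i) (q i) ∈ Icc 0 1 := fun i => ht.tres_mem_s11 (hpI i) (hqI i).1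
  obtain ⟨t, htI, hres⟩ := isCompact_Icc.exists_tendsto_ultrafilter 𝒰 hresI
  refine ⟨t, htI, hres, tendsto_nhds_unique (ht.tendsto hp hres hpI hresI) ?_⟩
  simpa only [ht.mul_tres_eq_min (hpI _) (hqI _)] using hp.min hq

end IsContTNorm

theorem liminf_mem_Icc_of_eventually {β : Type*} {F : Filter β} [F.NeBot] {g : β → ℝ} {a b : ℝ}
    (h : ∀ᶠ i in F, g i ∈ Icc a b) : liminf g F ∈ Icc a b :=
  ⟨le_liminf_of_le (isCoboundedUnder_ge_of_eventually_le F (h.mono fun _ hi => hi.2))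
      (h.mono fun _ hi => hi.1),
    liminf_le_of_frequently_le (h.mono fun _ hi => hi.2).frequently
      (isBoundedUnder_of_eventually_ge (h.mono fun _ hi => hi.1))⟩

section Net

variable {Λ : Type*} [Nonempty Λ] [SemilatticeSup Λ]

theorem iSup_iInf_le_eq_liminf {g : Λ → ℝ} {a b : ℝ} (hg : ∀ μ, g μ ∈ Icc a b) :
    ⨆ l : Λ, ⨅ σ : {σ : Λ // l ≤ σ}, g σ.1 = liminf g atTop := by
  have hbdd (l : Λ) : BddBelow (range fun σ : {σ : Λ // l ≤ σ} => g σ.1) :=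
    ⟨a, by rintro _ ⟨σ, rfl⟩; exact (hg σ).1⟩
  have tail_le (l : Λ) : ⨅ σ : {σ : Λ // l ≤ σ}, g σ.1 ≤ g l := ciInf_le (hbdd l) ⟨l, le_rfl⟩
  refine le_antisymm (ciSup_le fun l => le_liminf_of_le ?_ ?_) (liminf_le_of_le ?_ fun c hc => ?_)
  · exact isCoboundedUnder_ge_of_le atTop fun μ => (hg μ).2
  · exact eventually_atTop.2 ⟨l, fun μ hμ => ciInf_le (hbdd l) ⟨μ, hμ⟩⟩
  · exact isBoundedUnder_of ⟨a, fun μ => (hg μ).1⟩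
  · obtain ⟨l, hl⟩ := eventually_atTop.1 hc
    have : Nonempty {σ : Λ // l ≤ σ} := ⟨⟨l, le_rfl⟩⟩
    refine le_ciSup_of_le ⟨b, ?_⟩ l (le_ciInf fun σ => hl σ σ.2)
    rintro _ ⟨l', rfl⟩
    exact (tail_le l').trans (hg l').2

theorem tendsto_liminf_of_eventually_forall_ge {F : Λ → Λ → ℝ} {L : ℝ}
    (hF : ∀ U ∈ 𝓝 L, ∀ᶠ μ in atTop, ∀ ν, μ ≤ ν → F μ ν ∈ U) :
    Tendsto (fun μ => liminf (F μ) atTop) atTop (𝓝 L) :=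
  (nhds_basis_Icc_pos L).tendsto_right_iff.2 fun ε hε =>
    (hF _ (Icc_mem_nhds (by linarith) (by linarith))).mono fun μ hμ =>
      liminf_mem_Icc_of_eventually (eventually_atTop.2 ⟨μ, hμ⟩)

variable {α : Type*} {A : α → α → ℝ} {x : Λ → α}

theorem FwdCauchy.exists_eventually_forall_ge (h : FwdCauchy A x) :
    ∃ L, ∀ U ∈ 𝓝 L, ∀ᶠ μ in atTop, ∀ ν, μ ≤ ν → A (x μ) (x ν) ∈ U := by
  obtain ⟨L, hL⟩ := h
  refine ⟨L, fun U hU => ?_⟩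
  obtain ⟨q, hq⟩ := eventually_atTop.1 (eventually_inf_principal.1 (hL hU))
  exact eventually_atTop.2 ⟨q.1 ⊔ q.2, fun μ hμ ν hν =>
    hq (μ, ν) ⟨le_sup_left.trans hμ, (le_sup_right.trans hμ).trans hν⟩ hν⟩

variable (hA : ∀ u v, A u v ∈ Icc 0 1)
include hA

theorem genWeight_eq_liminf (u : α) :
    genWeight A x u = liminf (fun μ => A u (x μ)) atTop :=
  iSup_iInf_le_eq_liminf fun μ => hA u (x μ)

theorem genCoweight_eq_liminf (v : α) :
    genCoweight A x v = liminf (fun μ => A (x μ) v) atTop :=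
  iSup_iInf_le_eq_liminf fun μ => hA (x μ) v

theorem genType_eq_liminf : genType A x = liminf (fun μ => A (x μ) (x μ)) atTop :=
  iSup_iInf_le_eq_liminf fun μ => hA (x μ) (x μ)

theorem genWeight_mem (u : α) : genWeight A x u ∈ Icc 0 1 := by
  rw [genWeight_eq_liminf hA]
  exact liminf_mem_Icc_of_eventually (Eventually.of_forall fun μ => hA u (x μ))

end Net

section PresheafHom

variable {f : ℝ → ℝ → ℝ} (ht : IsContTNorm f) {α : Type*} {A : α → α → ℝ}
  {Λ : Type*} [Nonempty Λ] [SemilatticeSup Λ] {x : Λ → α} {𝒰 : Ultrafilter Λ} {L b : ℝ}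
include ht

theorem iInf_tres_genWeight_mul_le (hA : ∀ u v, A u v ∈ Icc 0 1) {y : α}
    (h𝒰 : (𝒰 : Filter Λ) ≤ atTop)
    (hweight : Tendsto (fun μ => genWeight A x (x μ)) atTop (𝓝 L))
    (hb : Tendsto (fun μ => A (x μ) y) 𝒰 (𝓝 b)) (hbL : b ≤ L) :
    ⨅ u, f (tres f (genWeight A x u) (A u y)) L ≤ b := by
  have hφ := genWeight_mem (x := x) hA
  have hL : L ∈ Icc 0 1 := isClosed_Icc.mem_of_tendsto hweight (Eventually.of_forall fun μ => hφ _)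
  obtain ⟨t, htI, ht𝒰, hLt⟩ :=
    ht.exists_tendsto_tres (hweight.mono_left h𝒰) hb (fun μ => hφ _) (fun μ => hA _ _)
  have hbdd : BddBelow (range fun u => f (tres f (genWeight A x u) (A u y)) L) :=
    ⟨0, by rintro _ ⟨u, rfl⟩; exact (ht.mem (ht.tres_mem_s11 (hφ u) (hA u y).1) hL).1⟩
  calc ⨅ u, f (tres f (genWeight A x u) (A u y)) L
      ≤ f t L := ge_of_tendsto
        (ht.tendsto ht𝒰 tendsto_const_nhds (fun μ => ht.tres_mem_s11 (hφ _) (hA _ _).1) fun _ => hL)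
        (Eventually.of_forall fun μ => ciInf_le hbdd (x μ))
    _ = f L t := ht.comm htI hL
    _ = b := by rw [hLt, min_eq_right hbL]

theorem le_tres_genWeight_mul (hA : IsDCat f A) {y : α}
    (h𝒰 : (𝒰 : Filter Λ) ≤ atTop)
    (hdiag : Tendsto (fun μ => A (x μ) (x μ)) atTop (𝓝 L))
    (hb : Tendsto (fun μ => A (x μ) y) 𝒰 (𝓝 b)) (hbL : b ≤ L) (u : α) :
    b ≤ f (tres f (genWeight A x u) (A u y)) L := by
  have hAI := hA.1
  have hL : L ∈ Icc 0 1 := isClosed_Icc.mem_of_tendsto hdiag (Eventually.of_forall fun μ => hAI _ _)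
  have hφ := genWeight_mem (x := x) hAI u
  obtain ⟨t, htI, ht𝒰, hLt⟩ :=
    ht.exists_tendsto_tres (hdiag.mono_left h𝒰) hb (fun μ => hAI _ _) (fun μ => hAI _ _)
  obtain ⟨d, hdI, hd⟩ := isCompact_Icc.exists_tendsto_ultrafilter 𝒰 fun μ => hAI u (x μ)
  have hφd : genWeight A x u ≤ d := by
    rw [genWeight_eq_liminf hAI]
    exact (mapClusterPt_iff_ultrafilter.2 ⟨𝒰, h𝒰, hd⟩).liminf_le
      (isBoundedUnder_of ⟨0, fun μ => (hAI _ _).1⟩)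
  have hcomp : f t d ≤ A u y :=
    le_of_tendsto (ht.tendsto ht𝒰 hd (fun μ => ht.tres_mem_s11 (hAI _ _) (hAI _ _).1) fun μ => hAI _ _)
      (Eventually.of_forall fun μ => hA.2.2 u (x μ) y)
  have ht_le : t ≤ tres f (genWeight A x u) (A u y) := le_tres htI <|
    calc f (genWeight A x u) t ≤ f d t := ht.mono_left hφ hdI htI hφd
      _ = f t d := ht.comm hdI htI
      _ ≤ A u y := hcomp
  calc b = f L t := by rw [hLt, min_eq_right hbL]
    _ = f t L := ht.comm hL htI
    _ ≤ f (tres f (genWeight A x u) (A u y)) L :=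
      ht.mono_left htI (ht.tres_mem_s11 hφ (hAI u y).1) hL ht_le

theorem presheafHom_genWeight_eq_genCoweight (hA : IsDCat f A) (hfc : FwdCauchy A x) (y : α) :
    min (A y y) (⨅ u, f (tres f (genWeight A x u) (A u y)) (genType A x)) =
      genCoweight A x y := by
  have hAI := hA.1
  obtain ⟨L, hL⟩ := hfc.exists_eventually_forall_ge
  have hdiag : Tendsto (fun μ => A (x μ) (x μ)) atTop (𝓝 L) :=
    fun U hU => (hL U hU).mono fun μ h => h μ le_rfl
  have hweight : Tendsto (fun μ => genWeight A x (x μ)) atTop (𝓝 L) := by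
    simpa only [genWeight_eq_liminf hAI] using tendsto_liminf_of_eventually_forall_ge hL
  rw [genType_eq_liminf hAI, hdiag.liminf_eq, genCoweight_eq_liminf hAI]
  set b := liminf (fun μ => A (x μ) y) atTop
  obtain ⟨𝒰, h𝒰, hb⟩ := mapClusterPt_iff_ultrafilter.1 (MapClusterPt.liminf
    (isCoboundedUnder_ge_of_le atTop fun μ => (hAI _ _).2)
    (isBoundedUnder_of ⟨0, fun μ => (hAI _ _).1⟩) : MapClusterPt b atTop fun μ => A (x μ) y)
  have hbL : b ≤ L := le_of_tendsto_of_tendsto' hb (hdiag.mono_left h𝒰) fun μ =>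
    (hA.2.1 _ _).trans (min_le_left _ _)
  have : Nonempty α := ⟨y⟩
  refine le_antisymm
    ((min_le_right _ _).trans (iInf_tres_genWeight_mul_le ht hAI h𝒰 hweight hb hbL))
    (le_min ?_ (le_ciInf (le_tres_genWeight_mul ht hA h𝒰 hdiag hb hbL)))
  exact le_of_tendsto' hb fun μ => (hA.2.1 _ _).trans (min_le_right _ _)

end PresheafHom

/-- for the weight generated by a forward Cauchy net, an element is a
supremum of the weight iff it is a Yoneda limit of the net. -/
theorem stmt11 (f : ℝ → ℝ → ℝ) (ht : IsContTNorm f)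
    {α : Type*} (A : α → α → ℝ) (hA : IsDCat f A)
    {Λ : Type*} [Nonempty Λ] [SemilatticeSup Λ] (x : Λ → α)
    (hfc : FwdCauchy A x) (s : α) :
    IsSupremum f A (genType A x) (genWeight A x) s ↔ YonedaLim A x s := by
  simp only [IsSupremum, YonedaLim, presheafHom_genWeight_eq_genCoweight ht hA hfc]
end
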